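/- arXiv:1804.08573 — 3 statements merged into one kernel-verified Lean document; each statement's English description precedes it below -/
import Mathlib

section
/- Let Ω ⊂ ℝⁿ be a bounded open set, R > 0, and let A be a nonempty open subset of Ω such that for every x ∈ A, dist(x, ∂Ω) = dist(x, ∂A) + R. Then A is contained in Ω_R := {x ∈ Ω : dist(x, ∂Ω) > R}, and the boundary ∂A is contained in {x ∈ Ω : dist(x, ∂Ω) = R}. -/
open Set Metric Bornology

theorem stmt0 (n : ℕ) (Ω A : Set (EuclideanSpace ℝ (Fin n))) (R : ℝ)
    (hΩo : IsOpen Ω) (hΩb : IsBounded Ω)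
    (hR : 0 < R) (hAo : IsOpen A) (hAne : A.Nonempty) (hAΩ : A ⊆ Ω)
    (hd : ∀ x ∈ A, infDist x (frontier Ω) = infDist x (frontier A) + R) :
    A ⊆ {x ∈ Ω | R < infDist x (frontier Ω)} ∧
      frontier A ⊆ {x ∈ Ω | infDist x (frontier Ω) = R} := by
  -- frontier A is nonempty
  have hfAne : (frontier A).Nonempty := by
    by_contra h
    rw [Set.not_nonempty_iff_eq_empty] at h
    have hclopen : IsClopen A := isClopen_iff_frontier_eq_empty.mpr h
    rcases isClopen_iff.mp hclopen with rfl | rfl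
    · exact hAne.ne_empty rfl
    · have hΩuniv : Ω = univ := eq_univ_of_univ_subset hAΩ
      obtain ⟨x, hx⟩ := hAne
      have := hd x hx
      rw [hΩuniv, h, infDist_empty] at this
      linarith
  -- the equality extends to closure A
  have hclosed : IsClosed {x : EuclideanSpace ℝ (Fin n) |
      infDist x (frontier Ω) = infDist x (frontier A) + R} :=
    isClosed_eq (continuous_infDist_pt _) ((continuous_infDist_pt _).add continuous_const)
  have hext : ∀ x ∈ closure A, infDist x (frontier Ω) = infDist x (frontier A) + R :=
    closure_minimal (fun x hx => hd x hx) hclosed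
  constructor
  · intro x hx
    have hxf : x ∉ frontier A := fun h => h.2 (by rwa [hAo.interior_eq])
    have hpos : 0 < infDist x (frontier A) :=
      (isClosed_frontier.notMem_iff_infDist_pos hfAne).mp hxf
    refine ⟨hAΩ hx, ?_⟩
    rw [hd x hx]
    linarith
  · intro x hx
    have hxc : x ∈ closure A := hx.1
    have h0 : infDist x (frontier A) = 0 :=
      infDist_zero_of_mem hx
    have hR' : infDist x (frontier Ω) = R := by
      have := hext x hxc
      rw [h0] at this
      linarith
    refine ⟨?_, hR'⟩
    have hxΩc : x ∈ closure Ω := closure_mono hAΩ hxc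
    rcases (closure_eq_interior_union_frontier Ω ▸ hxΩc) with h | h
    · rwa [hΩo.interior_eq] at h
    · exfalso
      have : infDist x (frontier Ω) = 0 := infDist_zero_of_mem h
      linarith
end

section
/- Let Ω ⊂ ℝⁿ be a bounded open connected set, R > 0, and let A be a nonempty open subset of Ω such that d(x) = dist(x, ∂A) + R for all x ∈ A, where d(x) = dist(x, ∂Ω). Then A is a union of connected components of Ω_R := {x ∈ Ω : d(x) > R}. In particular, if Ω_R is connected, then A = Ω_R. -/
open Set Metric Bornology

theorem stmt1 (n : ℕ) (Ω A : Set (EuclideanSpace ℝ (Fin n))) (R : ℝ)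
    (hΩo : IsOpen Ω) (hΩb : IsBounded Ω) (hΩc : IsConnected Ω)
    (hR : 0 < R) (hAo : IsOpen A) (hAne : A.Nonempty) (hAΩ : A ⊆ Ω)
    (hd : ∀ x ∈ A, infDist x (frontier Ω) = infDist x (frontier A) + R) :
    A ⊆ {x ∈ Ω | R < infDist x (frontier Ω)} ∧
      (∀ x ∈ A, connectedComponentIn {x ∈ Ω | R < infDist x (frontier Ω)} x ⊆ A) ∧
      (IsConnected {x ∈ Ω | R < infDist x (frontier Ω)} →
        A = {x ∈ Ω | R < infDist x (frontier Ω)}) := by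
  set S : Set (EuclideanSpace ℝ (Fin n)) := {x ∈ Ω | R < infDist x (frontier Ω)} with hS
  -- frontier A is nonempty
  have hfA : (frontier A).Nonempty := by
    by_contra h
    rw [Set.not_nonempty_iff_eq_empty] at h
    have hclopen : IsClopen A := isClopen_iff_frontier_eq_empty.mpr h
    have hAuniv : A = univ := hclopen.eq_univ hAne
    have hΩuniv : Ω = univ := eq_univ_of_univ_subset (hAuniv ▸ hAΩ)
    obtain ⟨x, hx⟩ := hAne
    have := hd x hx
    rw [hΩuniv, hAuniv, frontier_univ, infDist_empty] at this
    linarith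
  -- A ⊆ S
  have h1 : A ⊆ S := by
    intro x hx
    refine ⟨hAΩ hx, ?_⟩
    rw [hd x hx]
    have hxnf : x ∉ frontier A := by
      rw [frontier, hAo.interior_eq]
      exact fun h => h.2 hx
    have : 0 < infDist x (frontier A) :=
      (isClosed_frontier.notMem_iff_infDist_pos hfA).mp hxnf
    linarith
  -- closure A ∩ S ⊆ A
  have hclosed : closure A ∩ S ⊆ A := by
    rintro y ⟨hyc, hyΩ, hyR⟩
    by_contra hyA
    have hyf : y ∈ frontier A := by
      rw [frontier, hAo.interior_eq]; exact ⟨hyc, hyA⟩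
    have hcont : Continuous fun x : EuclideanSpace ℝ (Fin n) =>
        infDist x (frontier Ω) - infDist x (frontier A) :=
      (continuous_infDist_pt _).sub (continuous_infDist_pt _)
    have heq : EqOn (fun x : EuclideanSpace ℝ (Fin n) =>
        infDist x (frontier Ω) - infDist x (frontier A)) (fun _ => R) A := by
      intro x hx
      simp only
      rw [hd x hx]; ring
    have heqc := heq.closure hcont continuous_const
    have hy := heqc hyc
    simp only at hy
    have h0 : infDist y (frontier A) = 0 :=
      infDist_zero_of_mem hyf
    rw [h0, sub_zero] at hy
    linarith
  -- components
  have h2 : ∀ x ∈ A, connectedComponentIn S x ⊆ A := by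
    intro x hx
    have hxS : x ∈ S := h1 hx
    have hpc : IsPreconnected (connectedComponentIn S x) :=
      isPreconnected_connectedComponentIn
    have hsub : connectedComponentIn S x ⊆ S := connectedComponentIn_subset _ _
    have hUV : connectedComponentIn S x ⊆ A ∪ (closure A)ᶜ := by
      intro y hy
      by_cases h : y ∈ closure A
      · exact Or.inl (hclosed ⟨h, hsub hy⟩)
      · exact Or.inr h
    refine hpc.subset_left_of_subset_union hAo isClosed_closure.isOpen_compl
      (disjoint_compl_right.mono_left subset_closure) hUV
      ⟨x, mem_connectedComponentIn hxS, hx⟩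
  refine ⟨h1, h2, fun hSc => ?_⟩
  obtain ⟨x, hx⟩ := hAne
  have := hSc.isPreconnected.connectedComponentIn (h1 hx)
  exact subset_antisymm h1 (this ▸ h2 x hx)
end

section
/- Let Ω ⊂ ℝⁿ be open and bounded with inradius R_Ω, and let u : closure(Ω) → ℝ be continuous with u = 1 on ∂Ω, and suppose u is Lipschitz on the open set Ω⁺ := {x ∈ Ω : u(x) > 0} with Lipschitz constant L < 1/R_Ω along segments from points of Ω⁺ to their nearest boundary points; more precisely, suppose |∇u| ≤ L almost everywhere on Ω⁺ in the sense that |u(x) − u(y)| ≤ L|x−y| whenever the segment [x,y] lies in closure(Ω⁺). Then u(x) ≥ 1 − L·R_Ω > 0 for all x in the closure of Ω⁺, and consequently Ω⁺ = Ω and u has no free boundary inside Ω (the set {u = 0} ∩ Ω is empty). -/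
open Set Metric Bornology Filter Topology

set_option maxHeartbeats 1000000 in
theorem stmt3 (n : ℕ) (Ω : Set (EuclideanSpace ℝ (Fin n)))
    (hΩo : IsOpen Ω) (hΩb : IsBounded Ω) (hΩne : Ω.Nonempty) (hΩc : IsConnected Ω)
    (RΩ : ℝ) (hRΩ : RΩ = sSup ((fun x => infDist x (frontier Ω)) '' Ω)) (hRpos : 0 < RΩ)
    (u : EuclideanSpace ℝ (Fin n) → ℝ) (L : ℝ) (hL0 : 0 ≤ L) (hL : L < 1 / RΩ)
    (hu : ContinuousOn u (closure Ω)) (hub : ∀ x ∈ frontier Ω, u x = 1)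
    (hLip : ∀ x y : EuclideanSpace ℝ (Fin n),
      segment ℝ x y ⊆ closure {z ∈ Ω | 0 < u z} → |u x - u y| ≤ L * ‖x - y‖) :
    (∀ x ∈ closure {z ∈ Ω | 0 < u z}, 1 - L * RΩ ≤ u x) ∧
      0 < 1 - L * RΩ ∧
      {z ∈ Ω | 0 < u z} = Ω ∧
      {x ∈ Ω | u x = 0} = ∅ := by
  have hLR1 : L * RΩ < 1 := (lt_div_iff₀ hRpos).mp hL
  have hpos1 : 0 < 1 - L * RΩ := by linarith
  -- frontier is nonempty
  have hfr : (frontier Ω).Nonempty := by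
    rcases eq_empty_or_nonempty (frontier Ω) with h | h
    · exfalso
      have himg : (fun x => infDist x (frontier Ω)) '' Ω = {0} := by
        rw [h]
        simpa [Metric.infDist_empty] using hΩne.image_const (0 : ℝ)
      rw [hRΩ, himg, csSup_singleton] at hRpos
      exact lt_irrefl 0 hRpos
    · exact h
  obtain ⟨p₀, hp₀⟩ := hfr
  have hp₀c : p₀ ∉ Ω := by
    rw [hΩo.frontier_eq] at hp₀
    exact hp₀.2
  obtain ⟨r₀, hr₀⟩ := hΩb.subset_closedBall p₀
  have hbdd : BddAbove ((fun x => infDist x (frontier Ω)) '' Ω) := by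
    refine ⟨r₀, ?_⟩
    rintro v ⟨y, hy, rfl⟩
    exact le_trans (infDist_le_dist_of_mem hp₀) (mem_closedBall.mp (hr₀ hy))
  -- the main step: on Ω, u is positive and bounded below by 1 - L * RΩ
  have main : ∀ x ∈ Ω, 0 < u x ∧ 1 - L * RΩ ≤ u x := by
    intro x hx
    set d := infDist x Ωᶜ with hd
    have hdR : d ≤ RΩ := by
      have h1 : infDist x Ωᶜ ≤ infDist x (frontier Ω) := by
        refine infDist_le_infDist_of_subset ?_ ⟨p₀, hp₀⟩
        rw [hΩo.frontier_eq]
        exact fun z hz => hz.2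
      rw [hRΩ]
      exact le_trans h1 (le_csSup hbdd ⟨x, hx, rfl⟩)
    have hballΩ : ball x d ⊆ Ω := ball_infDist_compl_subset
    have hd0 : 0 < d := by
      obtain ⟨r, hr, hball⟩ := Metric.isOpen_iff.mp hΩo x hx
      refine lt_of_lt_of_le hr (not_lt.mp fun hlt => ?_)
      obtain ⟨y, hy, hdy⟩ := (infDist_lt_iff ⟨p₀, hp₀c⟩).mp hlt
      exact hy (hball (mem_ball'.mpr hdy))
    obtain ⟨p, hpc, hpd⟩ := (isClosed_compl_iff.mpr hΩo).exists_infDist_eq_dist ⟨p₀, hp₀c⟩ x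
    have hxp : ‖x - p‖ = d := by rw [← dist_eq_norm, ← hpd]
    set γ : ℝ → EuclideanSpace ℝ (Fin n) := fun t => p + t • (x - p) with hγ
    have hγ1 : γ 1 = x := by simp [hγ]
    have hγ0 : γ 0 = p := by simp [hγ]
    have hγsub : ∀ t r : ℝ, γ t - γ r = (t - r) • (x - p) := by
      intro t r
      simp only [hγ]
      rw [sub_smul]
      abel
    have hγp : ∀ t : ℝ, 0 ≤ t → dist (γ t) p = t * d := by
      intro t ht
      rw [dist_eq_norm, ← hγ0, hγsub, sub_zero, norm_smul, Real.norm_eq_abs,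
        abs_of_nonneg ht, hxp]
    have hγΩ : ∀ t : ℝ, t ∈ Ioc (0 : ℝ) 1 → γ t ∈ Ω := by
      rintro t ⟨ht0, ht1⟩
      rcases eq_or_lt_of_le ht1 with rfl | ht1'
      · rwa [hγ1]
      · apply hballΩ
        have hdist : dist (γ t) x = (1 - t) * d := by
          rw [dist_eq_norm, ← hγ1, hγsub, norm_smul, Real.norm_eq_abs,
            abs_of_nonpos (by linarith), hxp]
          ring
        rw [mem_ball, hdist]
        nlinarith
    -- p is a frontier point, hence u p = 1
    have hpclΩ : p ∈ closure Ω := by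
      rw [Metric.mem_closure_iff]
      intro ε hε
      have ht' : (0 : ℝ) < min 1 (ε / (2 * d)) := lt_min one_pos (by positivity)
      refine ⟨γ (min 1 (ε / (2 * d))), hγΩ _ ⟨ht', min_le_left _ _⟩, ?_⟩
      rw [dist_comm, hγp _ ht'.le]
      have h1 : min 1 (ε / (2 * d)) * d ≤ (ε / (2 * d)) * d :=
        mul_le_mul_of_nonneg_right (min_le_right _ _) hd0.le
      have h2 : (ε / (2 * d)) * d = ε / 2 := by field_simp
      nlinarith
    have hpf : p ∈ frontier Ω := by
      rw [hΩo.frontier_eq]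
      exact ⟨hpclΩ, hpc⟩
    -- the set of parameters s such that u > 0 on γ '' (0, s]
    set A : Set ℝ := {s | s ∈ Icc (0 : ℝ) 1 ∧ ∀ t, t ∈ Ioc (0 : ℝ) s → 0 < u (γ t)} with hA
    have hA0 : (0 : ℝ) ∈ A :=
      ⟨⟨le_rfl, zero_le_one⟩, fun t ht => absurd ht.1 (not_lt.mpr ht.2)⟩
    have hAne : A.Nonempty := ⟨0, hA0⟩
    have hAbdd : BddAbove A := ⟨1, fun s hs => hs.1.2⟩
    -- key estimate along the segment
    have key : ∀ s, s ∈ A → ∀ t, t ∈ Ioc (0 : ℝ) s → 1 - L * (t * d) ≤ u (γ t) := by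
      intro s hs t ht
      have hts1 : t ≤ 1 := ht.2.trans hs.1.2
      have hpcp : p ∈ closure {z | z ∈ Ω ∧ 0 < u z} := by
        rw [Metric.mem_closure_iff]
        intro ε hε
        have ht' : (0 : ℝ) < min t (ε / (2 * d)) := lt_min ht.1 (by positivity)
        refine ⟨γ (min t (ε / (2 * d))), ⟨?_, ?_⟩, ?_⟩
        · exact hγΩ _ ⟨ht', (min_le_left _ _).trans hts1⟩
        · exact hs.2 _ ⟨ht', (min_le_left _ _).trans ht.2⟩
        · rw [dist_comm, hγp _ ht'.le]
          have h1 : min t (ε / (2 * d)) * d ≤ (ε / (2 * d)) * d :=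
            mul_le_mul_of_nonneg_right (min_le_right _ _) hd0.le
          have h2 : (ε / (2 * d)) * d = ε / 2 := by field_simp
          nlinarith
      have hsub : segment ℝ p (γ t) ⊆ closure {z | z ∈ Ω ∧ 0 < u z} := by
        intro w hw
        rw [segment_eq_image'] at hw
        obtain ⟨θ, hθ, rfl⟩ := hw
        have hwγ : (fun θ : ℝ => p + θ • (γ t - p)) θ = γ (θ * t) := by
          simp only [hγ]
          rw [add_sub_cancel_left, smul_smul]
        rw [hwγ]
        rcases eq_or_lt_of_le (mul_nonneg hθ.1 ht.1.le) with h0 | h0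
        · rw [← h0, hγ0]
          exact hpcp
        · have hθt : θ * t ≤ t := by nlinarith [hθ.2, ht.1.le]
          exact subset_closure ⟨hγΩ _ ⟨h0, hθt.trans hts1⟩, hs.2 _ ⟨h0, hθt.trans ht.2⟩⟩
      have hlip := hLip p (γ t) hsub
      have hnp : ‖p - γ t‖ = t * d := by
        rw [← hγ0, hγsub, norm_smul, Real.norm_eq_abs,
          abs_of_nonpos (by linarith [ht.1] : (0 : ℝ) - t ≤ 0), hxp]
        ring
      rw [hub p hpf, hnp] at hlip
      have habs := abs_le.mp hlip
      linarith [habs.2]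
    -- A contains a positive element
    have hposmem : ∃ s ∈ A, 0 < s := by
      have hpc2 : ContinuousWithinAt u (closure Ω) p := hu p hpclΩ
      obtain ⟨δ, hδ0, hδ⟩ :=
        Metric.continuousWithinAt_iff.mp hpc2 (1 / 2) (by norm_num)
      have hposδ : (0 : ℝ) < min 1 (δ / (2 * d)) := lt_min one_pos (by positivity)
      refine ⟨min 1 (δ / (2 * d)), ⟨⟨hposδ.le, min_le_left _ _⟩, ?_⟩, hposδ⟩
      intro t ht
      have ht1 : t ≤ 1 := ht.2.trans (min_le_left _ _)
      have hmem : γ t ∈ Ω := hγΩ t ⟨ht.1, ht1⟩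
      have hdist : dist (γ t) p < δ := by
        rw [hγp t ht.1.le]
        have h1 : t * d ≤ (δ / (2 * d)) * d :=
          mul_le_mul_of_nonneg_right (ht.2.trans (min_le_right _ _)) hd0.le
        have h2 : (δ / (2 * d)) * d = δ / 2 := by field_simp
        nlinarith
      have hval := hδ (subset_closure hmem) hdist
      rw [hub p hpf, Real.dist_eq] at hval
      have habs := abs_lt.mp hval
      linarith [habs.1]
    obtain ⟨s₁, hs₁A, hs₁0⟩ := hposmem
    set S := sSup A with hS
    have hS0 : 0 < S := lt_of_lt_of_le hs₁0 (le_csSup hAbdd hs₁A)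
    have hS1 : S ≤ 1 := csSup_le hAne fun s hs => hs.1.2
    have hγcont : Continuous γ := by
      simp only [hγ]
      exact continuous_const.add (continuous_id.smul continuous_const)
    -- S belongs to A
    have hSA : S ∈ A := by
      refine ⟨⟨hS0.le, hS1⟩, ?_⟩
      intro t ht
      rcases lt_or_eq_of_le ht.2 with hlt | heq
      · obtain ⟨s, hsA, hts⟩ := exists_lt_of_lt_csSup hAne hlt
        exact hsA.2 t ⟨ht.1, hts.le⟩
      · have hmemS : γ t ∈ Ω := hγΩ t ⟨ht.1, ht.2.trans hS1⟩
        have hcw : ContinuousWithinAt (fun r => u (γ r)) (Ioo 0 t) t := by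
          have h1 : ContinuousWithinAt u (closure Ω) (γ t) := hu _ (subset_closure hmemS)
          exact h1.comp hγcont.continuousWithinAt
            (fun r hr => subset_closure (hγΩ r ⟨hr.1, (hr.2.le.trans ht.2).trans hS1⟩))
        have hne2 : (𝓝[Ioo (0 : ℝ) t] t).NeBot := by
          rw [← mem_closure_iff_nhdsWithin_neBot, closure_Ioo (ne_of_lt ht.1)]
          exact ⟨ht.1.le, le_rfl⟩
        have hev : ∀ r ∈ Ioo (0 : ℝ) t, 1 - L * RΩ ≤ u (γ r) := by
          intro r hr
          have hrS : r < S := lt_of_lt_of_le hr.2 (heq ▸ le_rfl)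
          obtain ⟨s, hsA, hrs⟩ := exists_lt_of_lt_csSup hAne hrS
          have hk := key s hsA r ⟨hr.1, hrs.le⟩
          have hr1 : r ≤ 1 := (hr.2.le.trans ht.2).trans hS1
          have hb : L * (r * d) ≤ L * RΩ := by
            apply mul_le_mul_of_nonneg_left ?_ hL0
            nlinarith
          linarith
        have hfin : 1 - L * RΩ ≤ u (γ t) :=
          ge_of_tendsto hcw (eventually_nhdsWithin_of_forall hev)
        linarith
    -- in fact S = 1
    have hSeq1 : S = 1 := by
      by_contra hne1
      have hSlt : S < 1 := lt_of_le_of_ne hS1 hne1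
      have hmemS : γ S ∈ Ω := hγΩ S ⟨hS0, hS1⟩
      have huS : 0 < u (γ S) := hSA.2 S ⟨hS0, le_rfl⟩
      obtain ⟨δ, hδ0, hδ⟩ :=
        Metric.continuousWithinAt_iff.mp (hu _ (subset_closure hmemS)) (u (γ S)) huS
      have hq : (0 : ℝ) < δ / (2 * d) := by positivity
      have hs'A : min 1 (S + δ / (2 * d)) ∈ A := by
        refine ⟨⟨le_min zero_le_one (by linarith), min_le_left _ _⟩, ?_⟩
        intro t ht
        rcases le_or_gt t S with h | h
        · exact hSA.2 t ⟨ht.1, h⟩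
        · have ht1 : t ≤ 1 := ht.2.trans (min_le_left _ _)
          have htd : t ≤ S + δ / (2 * d) := ht.2.trans (min_le_right _ _)
          have hdist : dist (γ t) (γ S) < δ := by
            rw [dist_eq_norm, hγsub, norm_smul, Real.norm_eq_abs,
              abs_of_nonneg (by linarith : (0 : ℝ) ≤ t - S), hxp]
            have h1 : (t - S) * d ≤ (δ / (2 * d)) * d :=
              mul_le_mul_of_nonneg_right (by linarith) hd0.le
            have h2 : (δ / (2 * d)) * d = δ / 2 := by field_simp
            nlinarith
          have hmem : γ t ∈ Ω := hγΩ t ⟨ht.1, ht1⟩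
          have hval := hδ (subset_closure hmem) hdist
          rw [Real.dist_eq] at hval
          have habs := abs_lt.mp hval
          linarith [habs.1]
      have hle : min 1 (S + δ / (2 * d)) ≤ S := le_csSup hAbdd hs'A
      have hgt : S < min 1 (S + δ / (2 * d)) := lt_min hSlt (by linarith)
      linarith
    have h1A : (1 : ℝ) ∈ A := hSeq1 ▸ hSA
    have hx1 : 0 < u x := by
      have h := h1A.2 1 ⟨one_pos, le_rfl⟩
      rwa [hγ1] at h
    have hx2 : 1 - L * RΩ ≤ u x := by
      have hk := key 1 h1A 1 ⟨one_pos, le_rfl⟩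
      rw [hγ1] at hk
      have hb : L * (1 * d) ≤ L * RΩ := by
        apply mul_le_mul_of_nonneg_left ?_ hL0
        linarith
      linarith
    exact ⟨hx1, hx2⟩
  refine ⟨?_, hpos1, ?_, ?_⟩
  · intro x hx
    have hxc : x ∈ closure Ω := closure_mono (fun z hz => hz.1) hx
    by_cases hxΩ : x ∈ Ω
    · exact (main x hxΩ).2
    · have hxf : x ∈ frontier Ω := by
        rw [hΩo.frontier_eq]
        exact ⟨hxc, hxΩ⟩
      rw [hub x hxf]
      nlinarith [mul_nonneg hL0 hRpos.le]
  · ext z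
    exact ⟨fun h => h.1, fun h => ⟨h, (main z h).1⟩⟩
  · rw [eq_empty_iff_forall_notMem]
    rintro z ⟨hz, h0⟩
    exact (main z hz).1.ne' h0
end
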